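/- arXiv:2301.00890 — 3 statements merged into one kernel-verified Lean document; each statement's English description precedes it below -/
import Mathlib

section
/- Let μ be a probability measure supported on M ⊆ ⋃_{k=1}^K S_k, and {ρ_k} functions ρ_k : ℝ^D → [0,1] supported in S_k with Σ_k ρ_k = 1 on M. Set p_k = ∫ ρ_k dμ and, for those k with p_k > 0, let ν_k = (φ_k)_# (ρ_k μ / p_k) where φ_k is injective and bimeasurable on S_k. Then μ = Σ_{k : p_k > 0} p_k · (φ_k^{-1})_# ν_k, i.e. μ is a mixture of generative models with mixture weights p_k summing to 1. -/
open MeasureTheory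
open scoped Classical

/-! On `M` the `ρ k` form a partition of unity, so `μ = ∑ k, ρ k • μ`. A piece with `p k = 0`
vanishes because `ρ k ≥ 0`. A piece with `p k > 0` is concentrated on `S k`, where `ψ k` undoes
`φ k`, so pushing `ν k` forward by `ψ k` and rescaling by `p k` recovers it. -/

namespace MeasureTheory

variable {α β ι : Type*} {mα : MeasurableSpace α} {mβ : MeasurableSpace β} {μ : Measure α}

theorem withDensity_finsetSum (s : Finset ι) {f : ι → α → ENNReal} (hf : ∀ i, Measurable (f i)) :
    μ.withDensity (∑ i ∈ s, f i) = ∑ i ∈ s, μ.withDensity (f i) := by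
  induction s using Finset.induction_on with
  | empty => simp
  | insert i s hi ih =>
    rw [Finset.sum_insert hi, Finset.sum_insert hi, withDensity_add_left (hf i), ih]

theorem Measure.map_map_eq_self_of_ae_leftInverse {f : α → β} {g : β → α} (hf : Measurable f)
    (hg : Measurable g) (hgf : ∀ᵐ x ∂μ, g (f x) = x) : (μ.map f).map g = μ := by
  rw [Measure.map_map hg hf, Measure.map_congr (f := g ∘ f) (g := id) hgf, Measure.map_id]

theorem Measure.smul_map_map_inv_smul_eq_self {f : α → β} {g : β → α} (hf : Measurable f)
    (hg : Measurable g) (hgf : ∀ᵐ x ∂μ, g (f x) = x) {c : ENNReal} (hc0 : c ≠ 0) (hc : c ≠ ⊤) :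
    c • ((c⁻¹ • μ).map f).map g = μ := by
  rw [Measure.map_smul, Measure.map_smul, map_map_eq_self_of_ae_leftInverse hf hg hgf, smul_smul,
    ENNReal.mul_inv_cancel hc0 hc, one_smul]

theorem ae_withDensity_mem_of_support_subset {f : α → ENNReal} (hf : Measurable f) {s : Set α}
    (hs : Function.support f ⊆ s) : ∀ᵐ x ∂μ.withDensity f, x ∈ s :=
  (ae_withDensity_iff hf).2 (Filter.Eventually.of_forall fun _ hx => hs hx)

theorem withDensity_ofReal_eq_zero_of_integral_eq_zero {ρ : α → ℝ} (hρ : 0 ≤ ρ)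
    (hint : Integrable ρ μ) (h : ∫ x, ρ x ∂μ = 0) :
    μ.withDensity (fun x => ENNReal.ofReal (ρ x)) = 0 := by
  rw [withDensity_eq_zero_iff hint.1.aemeasurable.ennreal_ofReal]
  filter_upwards [(integral_eq_zero_iff_of_nonneg hρ hint).1 h] with x hx
  simp [hx]

theorem sum_withDensity_ofReal_eq_self {s : Finset ι} {ρ : ι → α → ℝ}
    (hρ : ∀ i, Measurable (ρ i)) (hρ0 : ∀ i, 0 ≤ ρ i) (hsum : ∀ᵐ x ∂μ, ∑ i ∈ s, ρ i x = 1) :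
    ∑ i ∈ s, μ.withDensity (fun x => ENNReal.ofReal (ρ i x)) = μ := by
  rw [← withDensity_finsetSum s fun i => (hρ i).ennreal_ofReal]
  conv_rhs => rw [← withDensity_one (μ := μ)]
  refine withDensity_congr_ae ?_
  filter_upwards [hsum] with x hx
  rw [Finset.sum_apply, Pi.one_apply, ← ENNReal.ofReal_sum_of_nonneg fun i _ => hρ0 i x, hx,
    ENNReal.ofReal_one]

theorem sum_integral_eq_one_of_ae_sum_eq_one [IsProbabilityMeasure μ] {s : Finset ι}
    {ρ : ι → α → ℝ} (hint : ∀ i ∈ s, Integrable (ρ i) μ) (hsum : ∀ᵐ x ∂μ, ∑ i ∈ s, ρ i x = 1) :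
    ∑ i ∈ s, ∫ x, ρ i x ∂μ = 1 := by
  rw [← integral_finsetSum s hint, integral_congr_ae hsum, integral_const, probReal_univ, one_smul]

end MeasureTheory

theorem mixture_of_generative_models_general
    {D d K : ℕ}
    (M : Set (EuclideanSpace ℝ (Fin D)))
    (S : Fin K → Set (EuclideanSpace ℝ (Fin D)))
    (ρ : Fin K → EuclideanSpace ℝ (Fin D) → ℝ)
    (hρmeas : ∀ k, Measurable (ρ k))
    (hρ01 : ∀ k x, ρ k x ∈ Set.Icc (0 : ℝ) 1)
    (hρsupp : ∀ k, Function.support (ρ k) ⊆ S k)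
    (hρsum : ∀ x ∈ M, ∑ k, ρ k x = 1)
    (μ : Measure (EuclideanSpace ℝ (Fin D))) [IsProbabilityMeasure μ]
    (hμM : μ Mᶜ = 0)
    (φ : Fin K → EuclideanSpace ℝ (Fin D) → EuclideanSpace ℝ (Fin d))
    (ψ : Fin K → EuclideanSpace ℝ (Fin d) → EuclideanSpace ℝ (Fin D))
    (hφmeas : ∀ k, Measurable (φ k))
    (hψmeas : ∀ k, Measurable (ψ k))
    (hψφ : ∀ k, ∀ x ∈ S k, ψ k (φ k x) = x)
    (p : Fin K → ℝ) (hp : ∀ k, p k = ∫ x, ρ k x ∂μ)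
    (ν : Fin K → Measure (EuclideanSpace ℝ (Fin d)))
    (hν : ∀ k, 0 < p k →
      ν k = Measure.map (φ k)
        ((ENNReal.ofReal (p k))⁻¹ • μ.withDensity fun x => ENNReal.ofReal (ρ k x))) :
    (μ = ∑ k ∈ Finset.univ.filter fun k => 0 < p k,
        ENNReal.ofReal (p k) • Measure.map (ψ k) (ν k)) ∧
    ∑ k, p k = 1 := by
  have hρ0 : ∀ k, 0 ≤ ρ k := fun k x => (hρ01 k x).1
  have hint : ∀ k, Integrable (ρ k) μ := fun k =>
    .of_bound (hρmeas k).aestronglyMeasurable 1 <| .of_forall fun x =>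
      (Real.norm_of_nonneg (hρ01 k x).1).trans_le (hρ01 k x).2
  have hsum : ∀ᵐ x ∂μ, ∑ k, ρ k x = 1 :=
    (measure_eq_zero_iff_ae_notMem.1 hμM).mono fun x hx => hρsum x (not_not.1 hx)
  refine ⟨?_, by
    simpa only [hp] using sum_integral_eq_one_of_ae_sum_eq_one (fun k _ => hint k) hsum⟩
  calc μ = ∑ k, μ.withDensity fun x => ENNReal.ofReal (ρ k x) :=
        (sum_withDensity_ofReal_eq_self hρmeas hρ0 hsum).symm
    _ = ∑ k ∈ Finset.univ.filter fun k => 0 < p k, μ.withDensity fun x => ENNReal.ofReal (ρ k x) :=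
        (Finset.sum_filter_of_ne fun k _ hk => (hp k ▸ integral_nonneg (hρ0 k)).lt_of_ne fun h =>
          hk (withDensity_ofReal_eq_zero_of_integral_eq_zero (hρ0 k) (hint k) (hp k ▸ h.symm))).symm
    _ = _ := Finset.sum_congr rfl fun k hk => by
      have hpk := (Finset.mem_filter.1 hk).2
      have hψφ_ae : ∀ᵐ x ∂μ.withDensity fun x => ENNReal.ofReal (ρ k x), ψ k (φ k x) = x :=
        (ae_withDensity_mem_of_support_subset (hρmeas k).ennreal_ofReal
          fun x hx => hρsupp k fun h0 => hx (by simp [h0])).mono (hψφ k)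
      rw [hν k hpk, Measure.smul_map_map_inv_smul_eq_self (hφmeas k) (hψmeas k) hψφ_ae
        (ENNReal.ofReal_pos.2 hpk).ne' ENNReal.ofReal_ne_top]

/-- A probability measure supported on `M ⊆ ⋃ k S k` is a mixture of the
generative models `(φ k⁻¹)_# ν_k` with weights `p k = ∫ ρ k dμ`, the weights summing to one. -/
theorem mixture_of_generative_models
    {D d K : ℕ}
    (M : Set (EuclideanSpace ℝ (Fin D)))
    (S : Fin K → Set (EuclideanSpace ℝ (Fin D)))
    (hMcov : M ⊆ ⋃ k, S k)
    (ρ : Fin K → EuclideanSpace ℝ (Fin D) → ℝ)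
    (hρmeas : ∀ k, Measurable (ρ k))
    (hρ01 : ∀ k x, ρ k x ∈ Set.Icc (0 : ℝ) 1)
    (hρsupp : ∀ k, Function.support (ρ k) ⊆ S k)
    (hρsum : ∀ x ∈ M, ∑ k, ρ k x = 1)
    (μ : Measure (EuclideanSpace ℝ (Fin D))) [IsProbabilityMeasure μ]
    (hμM : μ Mᶜ = 0)
    (φ : Fin K → EuclideanSpace ℝ (Fin D) → EuclideanSpace ℝ (Fin d))
    (ψ : Fin K → EuclideanSpace ℝ (Fin d) → EuclideanSpace ℝ (Fin D))
    (hφmeas : ∀ k, Measurable (φ k))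
    (hψmeas : ∀ k, Measurable (ψ k))
    (hφinj : ∀ k, Set.InjOn (φ k) (S k))
    (hψφ : ∀ k, ∀ x ∈ S k, ψ k (φ k x) = x)
    (p : Fin K → ℝ) (hp : ∀ k, p k = ∫ x, ρ k x ∂μ)
    (ν : Fin K → Measure (EuclideanSpace ℝ (Fin d)))
    (hν : ∀ k, 0 < p k →
      ν k = Measure.map (φ k)
        ((ENNReal.ofReal (p k))⁻¹ • μ.withDensity fun x => ENNReal.ofReal (ρ k x))) :
    (μ = ∑ k ∈ Finset.univ.filter fun k => 0 < p k,
        ENNReal.ofReal (p k) • Measure.map (ψ k) (ν k)) ∧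
    ∑ k, p k = 1 :=
  mixture_of_generative_models_general M S ρ hρmeas hρ01 hρsupp hρsum μ hμM φ ψ hφmeas hψmeas hψφ p
    hp ν hν
end

section
/- Let G : B_{r_0}^d → ℝ^D be continuously differentiable with G(0) = x_0, and suppose sup_{v ∈ S^{d-1}} sup_{z,z' ∈ B_{r_0}^d} ‖(J_G(z) − J_G(z')) v‖ / ‖J_G(0) v‖ ≤ 1/3. Let z = a v with ‖v‖ = 1 and 0 < a ≤ r_0, and let 0 < r < a, z' = (a − r) v. Then ‖G(z') − G(0)‖ ≤ ((a − r/2)/a) · ‖G(z) − G(0)‖. -/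
/-!
Along the ray `t ↦ G (t • v)` the velocity `J_G(t v) v` stays within `c/3` of `J_G(0) v`, where
`c = ‖J_G(0) v‖`. Testing against a norming functional `l` of `G((a - r) v) - G 0`, the mean value
theorem gives `l`-slopes on `[0, a - r]` and on `[a - r, a]` that differ by at most `c/3`, so
`a ‖G((a - r) v) - G 0‖ ≤ (a - r) (‖G(a v) - G 0‖ + r c / 3)`. On the other hand the velocity
has norm at least `2c/3`, so `2 a c ≤ 3 ‖G(a v) - G 0‖`, which absorbs the error term `r c / 3`.
-/

open Metric Set

section DerivVariation

variable {x y z δ : ℝ}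

theorem mul_image_sub_le_of_deriv_le_add {h g : ℝ → ℝ}
    (hh : ∀ t ∈ Icc x z, HasDerivAt h (g t) t)
    (hg : ∀ t ∈ Icc x z, ∀ t' ∈ Icc x z, g t ≤ g t' + δ) (hxy : x < y) (hyz : y < z) :
    (z - x) * (h y - h x) ≤ (y - x) * (h z - h x + (z - y) * δ) := by
  have hsub₁ : Icc x y ⊆ Icc x z := Icc_subset_Icc_right hyz.le
  have hsub₂ : Icc y z ⊆ Icc x z := Icc_subset_Icc_left hxy.le
  obtain ⟨ξ, hξ, hξslope⟩ := exists_hasDerivAt_eq_slope h g hxy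
    (fun t ht => (hh t (hsub₁ ht)).continuousAt.continuousWithinAt)
    (fun t ht => hh t (hsub₁ (Ioo_subset_Icc_self ht)))
  obtain ⟨η, hη, hηslope⟩ := exists_hasDerivAt_eq_slope h g hyz
    (fun t ht => (hh t (hsub₂ ht)).continuousAt.continuousWithinAt)
    (fun t ht => hh t (hsub₂ (Ioo_subset_Icc_self ht)))
  have hleft : h y - h x = (y - x) * g ξ := by
    rw [hξslope]; field_simp [(sub_pos.2 hxy).ne']
  have hright : h z - h y = (z - y) * g η := by
    rw [hηslope]; field_simp [(sub_pos.2 hyz).ne']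
  have hξη : g ξ ≤ g η + δ :=
    hg ξ (hsub₁ (Ioo_subset_Icc_self hξ)) η (hsub₂ (Ioo_subset_Icc_self hη))
  have hxz : h z - h x = (y - x) * g ξ + (z - y) * g η := by linarith
  rw [hleft, hxz]
  nlinarith [mul_le_mul_of_nonneg_left hξη (mul_nonneg (sub_pos.2 hxy).le (sub_pos.2 hyz).le)]

variable {F : Type*} [NormedAddCommGroup F] [NormedSpace ℝ F] {f φ : ℝ → F}

theorem mul_norm_image_sub_le_of_norm_deriv_sub_le
    (hf : ∀ t ∈ Icc x z, HasDerivAt f (φ t) t)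
    (hφ : ∀ t ∈ Icc x z, ∀ t' ∈ Icc x z, ‖φ t - φ t'‖ ≤ δ) (hxy : x < y) (hyz : y < z) :
    (z - x) * ‖f y - f x‖ ≤ (y - x) * (‖f z - f x‖ + (z - y) * δ) := by
  obtain ⟨l, hl, hly⟩ := exists_dual_vector'' ℝ (f y - f x)
  have hlφ : ∀ t ∈ Icc x z, ∀ t' ∈ Icc x z, l (φ t) ≤ l (φ t') + δ := fun t ht t' ht' =>
    calc l (φ t) = l (φ t') + l (φ t - φ t') := by rw [map_sub]; ring
      _ ≤ l (φ t') + ‖l‖ * ‖φ t - φ t'‖ := by gcongr; exact (le_abs_self _).trans (l.le_opNorm _)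
      _ ≤ l (φ t') + 1 * δ := by gcongr; exact hφ t ht t' ht'
      _ = l (φ t') + δ := by ring
  have hlz : l (f z - f x) ≤ ‖f z - f x‖ :=
    (le_abs_self _).trans ((l.le_opNorm _).trans (mul_le_of_le_one_left (norm_nonneg _) hl))
  have key := mul_image_sub_le_of_deriv_le_add (h := fun t => l (f t))
    (fun t ht => l.hasFDerivAt.comp_hasDerivAt t (hf t ht)) hlφ hxy hyz
  simp only [← map_sub, hly, RCLike.ofReal_real_eq_id, id] at key
  nlinarith [sub_pos.2 hxy]

theorem mul_norm_deriv_sub_le_norm_image_sub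
    (hf : ∀ t ∈ Icc x z, HasDerivAt f (φ t) t)
    (hφ : ∀ t ∈ Icc x z, ∀ t' ∈ Icc x z, ‖φ t - φ t'‖ ≤ δ) (hxz : x ≤ z) :
    (z - x) * (‖φ x‖ - δ) ≤ ‖f z - f x‖ := by
  have hdev := norm_image_sub_le_of_norm_deriv_le_segment' (f := fun t => f t - t • φ x)
    (fun t ht => ((hf t ht).sub ((hasDerivAt_id t).smul_const (φ x))).hasDerivWithinAt)
    (fun t ht => by simpa using hφ t (Ico_subset_Icc_self ht) x (left_mem_Icc.2 hxz))
    z (right_mem_Icc.2 hxz)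
  have hsplit : (z - x) • φ x = (f z - f x) - (f z - z • φ x - (f x - x • φ x)) := by
    rw [sub_smul]; abel
  have hnorm := norm_sub_le (f z - f x) (f z - z • φ x - (f x - x • φ x))
  rw [← hsplit, norm_smul, Real.norm_of_nonneg (sub_nonneg.2 hxz)] at hnorm
  linarith

end DerivVariation

theorem radial_contraction_of_jacobian_variation_general {d D : ℕ}
    (G : EuclideanSpace ℝ (Fin d) → EuclideanSpace ℝ (Fin D))
    (r₀ : ℝ)
    (hG : ContDiff ℝ 1 G)
    (hvar : ∀ v : EuclideanSpace ℝ (Fin d), ‖v‖ = 1 →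
      ∀ z ∈ closedBall (0 : EuclideanSpace ℝ (Fin d)) r₀,
      ∀ z' ∈ closedBall (0 : EuclideanSpace ℝ (Fin d)) r₀,
        ‖fderiv ℝ G z v - fderiv ℝ G z' v‖ ≤ (1 / 3) * ‖fderiv ℝ G 0 v‖)
    (v : EuclideanSpace ℝ (Fin d)) (hv : ‖v‖ = 1)
    (a r : ℝ) (ha0 : 0 < a) (har₀ : a ≤ r₀) (hr0 : 0 < r) (hra : r < a) :
    ‖G ((a - r) • v) - G 0‖ ≤ ((a - r / 2) / a) * ‖G (a • v) - G 0‖ := by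
  have hray : ∀ t, HasDerivAt (fun t : ℝ => G (t • v)) (fderiv ℝ G (t • v) v) t := fun t =>
    ((hG.differentiable one_ne_zero _).hasFDerivAt.comp_hasDerivAt t
      (by simpa using (hasDerivAt_id t).smul_const v))
  have hball : ∀ t ∈ Icc 0 a, t • v ∈ closedBall (0 : EuclideanSpace ℝ (Fin d)) r₀ :=
    fun t ht => by simpa [norm_smul, hv, abs_of_nonneg ht.1] using ht.2.trans har₀
  have hφ : ∀ t ∈ Icc 0 a, ∀ t' ∈ Icc 0 a,
      ‖fderiv ℝ G (t • v) v - fderiv ℝ G (t' • v) v‖ ≤ 1 / 3 * ‖fderiv ℝ G 0 v‖ :=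
    fun t ht t' ht' => hvar v hv _ (hball t ht) _ (hball t' ht')
  have upper := mul_norm_image_sub_le_of_norm_deriv_sub_le (fun t _ => hray t) hφ
    (sub_pos.2 hra) (sub_lt_self a hr0)
  have lower := mul_norm_deriv_sub_le_norm_image_sub (fun t _ => hray t) hφ ha0.le
  simp only [zero_smul, sub_zero] at upper lower
  rw [div_mul_eq_mul_div, le_div_iff₀ ha0]
  nlinarith [mul_le_mul_of_nonneg_left lower hr0.le,
    mul_nonneg (mul_nonneg hr0.le hr0.le) (norm_nonneg (fderiv ℝ G 0 v))]

/-- Under a Jacobian-variation bound on the ball `B_{r₀}`, shrinking the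
radial coordinate from `a` to `a - r` shrinks the distance to the center value `G 0 = x₀`
by at least the factor `(a - r/2)/a`. -/
theorem radial_contraction_of_jacobian_variation {d D : ℕ}
    (G : EuclideanSpace ℝ (Fin d) → EuclideanSpace ℝ (Fin D))
    (r₀ : ℝ) (hr₀ : 0 < r₀)
    (x₀ : EuclideanSpace ℝ (Fin D))
    (hG : ContDiff ℝ 1 G) (hG0 : G 0 = x₀)
    (hvar : ∀ v : EuclideanSpace ℝ (Fin d), ‖v‖ = 1 →
      ∀ z ∈ closedBall (0 : EuclideanSpace ℝ (Fin d)) r₀,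
      ∀ z' ∈ closedBall (0 : EuclideanSpace ℝ (Fin d)) r₀,
        ‖fderiv ℝ G z v - fderiv ℝ G z' v‖ ≤ (1 / 3) * ‖fderiv ℝ G 0 v‖)
    (v : EuclideanSpace ℝ (Fin d)) (hv : ‖v‖ = 1)
    (a r : ℝ) (ha0 : 0 < a) (har₀ : a ≤ r₀) (hr0 : 0 < r) (hra : r < a) :
    ‖G ((a - r) • v) - G 0‖ ≤ ((a - r / 2) / a) * ‖G (a • v) - G 0‖ :=
  radial_contraction_of_jacobian_variation_general G r₀ hG hvar v hv a r ha0 har₀ hr0 hra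
end

section
/- Let μ be a probability measure on a compact set M ⊂ ℝ^D. Suppose there exist τ > 0, c > 0 such that for every x_0 ∈ M and every 0 < ε ≤ τ, μ(B_ε(x_0)) ≥ c ε^d. Let X_1, …, X_n be i.i.d. samples from μ. Then there exist constants C, c_1 (depending on c, d, τ and the covering numbers of M) such that with probability at least 1 − n^{-1}, every point x ∈ M lies within distance c_1 (log n / n)^{1/d} of some sample X_i, i.e. M ⊆ ⋃_{i=1}^n B_{c_1 (log n / n)^{1/d}}(X_i), provided n ≥ C. -/
/-!
A maximal `2r`-separated subset of `M` has pairwise disjoint `r`-balls, each of mass at least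
`p = c r^d`, so it is a `2r`-net of at most `1 / p` points. All `n` samples miss a given one of
these balls with probability at most `e^{-np}`, so by the union bound the samples meet every ball,
and hence form a `3r`-net of `M`, except with probability at most `e^{-np} / p`. Choosing
`p = 2 log n / n` makes this `1 / (2 n log n) ≤ 1 / n`.
-/

open MeasureTheory Metric
open scoped ENNReal NNReal

section Packing

variable {α : Type*} [PseudoMetricSpace α] [MeasurableSpace α] [OpensMeasurableSpace α]
  {μ : Measure α} {A : Set α} {r : ℝ≥0} {m : ℝ≥0∞}

lemma card_mul_le_measure_univ_of_isSeparated {S : Finset α}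
    (hS : IsSeparated (2 * r : ℝ≥0) (S : Set α)) (hm : ∀ x ∈ S, m ≤ μ (closedBall x r)) :
    S.card * m ≤ μ Set.univ := by
  have hdisj : (S : Set α).PairwiseDisjoint fun x => closedBall x r := by
    intro x hx y hy hxy
    refine closedBall_disjoint_closedBall ?_
    have h : 2 * r < nndist x y := by
      have : ((2 * r : ℝ≥0) : ℝ≥0∞) < edist x y := hS hx hy hxy
      rwa [edist_nndist, ENNReal.coe_lt_coe] at this
    have : (2 * r : ℝ) < dist x y := by rw [← coe_nndist]; exact_mod_cast h
    linarith
  calc S.card * m = ∑ _x ∈ S, m := by simp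
    _ ≤ ∑ x ∈ S, μ (closedBall x r) := Finset.sum_le_sum hm
    _ = μ (⋃ x ∈ S, closedBall x r) :=
      (measure_biUnion_finset hdisj fun _ _ => measurableSet_closedBall).symm
    _ ≤ μ Set.univ := measure_mono (Set.subset_univ _)

lemma packingNumber_ne_top_of_le_measure_closedBall [IsFiniteMeasure μ] (hm : m ≠ 0)
    (hA : ∀ x ∈ A, m ≤ μ (closedBall x r)) : packingNumber (2 * r) A ≠ ⊤ := by
  obtain ⟨N, hN⟩ := ENNReal.exists_nat_mul_gt hm (measure_ne_top μ Set.univ)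
  refine ne_top_of_le_ne_top (ENat.natCast_ne_top N) (iSup₂_le fun C hCA => iSup_le fun hC => ?_)
  by_contra! hNC
  obtain ⟨t, htC, ht⟩ := Set.exists_subset_encard_eq hNC.le
  have ht_fin : t.Finite := Set.finite_of_encard_eq_coe ht
  have hcard : ht_fin.toFinset.card = N := by
    rw [ht_fin.encard_eq_coe_toFinset_card] at ht
    exact_mod_cast ht
  have := card_mul_le_measure_univ_of_isSeparated (μ := μ) (S := ht_fin.toFinset)
    (by simpa using hC.subset htC) (fun x hx => hA x (hCA (htC (by simpa using hx))))
  rw [hcard] at this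
  exact this.not_gt hN

lemma exists_finset_net_card_mul_le_measure_univ [IsFiniteMeasure μ] {r : ℝ} (hr : 0 ≤ r)
    (hm : m ≠ 0) (hA : ∀ x ∈ A, m ≤ μ (closedBall x r)) :
    ∃ S : Finset α, ↑S ⊆ A ∧ A ⊆ ⋃ y ∈ S, closedBall y (2 * r) ∧ S.card * m ≤ μ Set.univ := by
  lift r to ℝ≥0 using hr
  have hP := packingNumber_ne_top_of_le_measure_closedBall hm hA
  have hfin : (maximalSeparatedSet (2 * r) A).Finite := by
    rw [← Set.encard_ne_top_iff, encard_maximalSeparatedSet hP]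
    exact hP
  refine ⟨hfin.toFinset, by simpa using maximalSeparatedSet_subset, ?_, ?_⟩
  · simpa using (isCover_maximalSeparatedSet hP).subset_iUnion_closedBall
  · refine card_mul_le_measure_univ_of_isSeparated
      (by rw [Set.Finite.coe_toFinset]; exact isSeparated_maximalSeparatedSet)
      fun x hx => hA x (maximalSeparatedSet_subset (by simpa using hx))

end Packing

section Sampling

variable {E : Type*} [MeasurableSpace E] {μ : Measure E} [IsProbabilityMeasure μ]

lemma measure_pi_forall_notMem_le_exp {B : Set E} (hB : MeasurableSet B) {p : ℝ}
    (hp : ENNReal.ofReal p ≤ μ B) (n : ℕ) :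
    Measure.pi (fun _ : Fin n => μ) {X | ∀ i, X i ∉ B} ≤ ENNReal.ofReal (Real.exp (-(n * p))) := by
  have hcompl : μ Bᶜ ≤ ENNReal.ofReal (Real.exp (-p)) := by
    rw [prob_compl_eq_one_sub hB, tsub_le_iff_right]
    calc (1 : ℝ≥0∞) ≤ ENNReal.ofReal (Real.exp (-p) + p) := by
          rw [← ENNReal.ofReal_one]
          exact ENNReal.ofReal_le_ofReal (by linarith [Real.add_one_le_exp (-p)])
      _ ≤ ENNReal.ofReal (Real.exp (-p)) + ENNReal.ofReal p := ENNReal.ofReal_add_le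
      _ ≤ ENNReal.ofReal (Real.exp (-p)) + μ B := by gcongr
  have hset : {X : Fin n → E | ∀ i, X i ∉ B} = Set.univ.pi fun _ => Bᶜ := by
    ext X; simp [Set.mem_pi]
  calc Measure.pi (fun _ : Fin n => μ) {X | ∀ i, X i ∉ B} = μ Bᶜ ^ n := by
        rw [hset, Measure.pi_pi, Finset.prod_const, Finset.card_univ, Fintype.card_fin]
    _ ≤ ENNReal.ofReal (Real.exp (-p)) ^ n := pow_le_pow_left' hcompl n
    _ = ENNReal.ofReal (Real.exp (-(n * p))) := by
        rw [← ENNReal.ofReal_pow (Real.exp_nonneg _), ← Real.exp_nat_mul, mul_neg]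

lemma ofReal_one_sub_le_measure_pi_forall_exists_mem {ι : Type*} (S : Finset ι)
    {B : ι → Set E} (hB : ∀ y ∈ S, MeasurableSet (B y)) {p : ℝ}
    (hp : ∀ y ∈ S, ENNReal.ofReal p ≤ μ (B y)) (n : ℕ) :
    ENNReal.ofReal (1 - S.card * Real.exp (-(n * p))) ≤
      Measure.pi (fun _ : Fin n => μ) {X | ∀ y ∈ S, ∃ i, X i ∈ B y} := by
  set G := {X : Fin n → E | ∀ y ∈ S, ∃ i, X i ∈ B y}
  have hGc : Gᶜ = ⋃ y ∈ S, {X | ∀ i, X i ∉ B y} := by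
    ext X; simp [G]
  have hG : MeasurableSet G := by
    have : G = ⋂ y ∈ S, ⋃ i, (fun X : Fin n → E => X i) ⁻¹' B y := by ext; simp [G]
    exact this ▸ Finset.measurableSet_biInter S fun y hy =>
      MeasurableSet.iUnion fun i => measurable_pi_apply i (hB y hy)
  have hfail :
      Measure.pi (fun _ : Fin n => μ) Gᶜ ≤ S.card * ENNReal.ofReal (Real.exp (-(n * p))) :=
    calc Measure.pi (fun _ : Fin n => μ) Gᶜ
        ≤ ∑ y ∈ S, Measure.pi (fun _ : Fin n => μ) {X | ∀ i, X i ∉ B y} :=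
          hGc ▸ measure_biUnion_finset_le S _
      _ ≤ ∑ _y ∈ S, ENNReal.ofReal (Real.exp (-(n * p))) :=
          Finset.sum_le_sum fun y hy => measure_pi_forall_notMem_le_exp (hB y hy) (hp y hy) n
      _ = S.card * ENNReal.ofReal (Real.exp (-(n * p))) := by simp
  rw [prob_compl_eq_one_sub hG, tsub_le_iff_right] at hfail
  rw [ENNReal.ofReal_sub _ (by positivity), ENNReal.ofReal_one,
    ENNReal.ofReal_mul (Nat.cast_nonneg _), ENNReal.ofReal_natCast, tsub_le_iff_left]
  exact hfail

end Sampling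

lemma ofReal_one_sub_le_measure_pi_subset_iUnion_closedBall {α : Type*} [PseudoMetricSpace α]
    [MeasurableSpace α] [OpensMeasurableSpace α] {μ : Measure α} [IsProbabilityMeasure μ]
    {A : Set α} {r p : ℝ} (hr : 0 ≤ r) (hp : 0 < p)
    (hA : ∀ x ∈ A, ENNReal.ofReal p ≤ μ (closedBall x r)) (n : ℕ) :
    ENNReal.ofReal (1 - Real.exp (-(n * p)) / p) ≤
      Measure.pi (fun _ : Fin n => μ) {X | A ⊆ ⋃ i, closedBall (X i) (3 * r)} := by
  obtain ⟨S, hSA, hAS, hcard⟩ :=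
    exists_finset_net_card_mul_le_measure_univ hr (ENNReal.ofReal_pos.2 hp).ne' hA
  have hcard' : (S.card : ℝ) * p ≤ 1 := by
    rw [measure_univ, ← ENNReal.ofReal_natCast, ← ENNReal.ofReal_mul (Nat.cast_nonneg _)] at hcard
    exact ENNReal.ofReal_le_one.mp hcard
  have hsub : {X : Fin n → α | ∀ y ∈ S, ∃ i, X i ∈ closedBall y r} ⊆
      {X | A ⊆ ⋃ i, closedBall (X i) (3 * r)} := by
    intro X hX x hx
    obtain ⟨y, hyS, hxy⟩ := Set.mem_iUnion₂.mp (hAS hx)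
    obtain ⟨i, hi⟩ := hX y hyS
    refine Set.mem_iUnion.mpr ⟨i, ?_⟩
    rw [mem_closedBall] at hxy hi ⊢
    linarith [dist_triangle x y (X i), dist_comm (X i) y]
  calc ENNReal.ofReal (1 - Real.exp (-(n * p)) / p)
      ≤ ENNReal.ofReal (1 - S.card * Real.exp (-(n * p))) := by
        refine ENNReal.ofReal_le_ofReal (sub_le_sub_left ?_ 1)
        rw [le_div_iff₀ hp, mul_right_comm]
        exact mul_le_of_le_one_left (Real.exp_nonneg _) hcard'
    _ ≤ Measure.pi (fun _ : Fin n => μ) {X | ∀ y ∈ S, ∃ i, X i ∈ closedBall y r} :=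
        ofReal_one_sub_le_measure_pi_forall_exists_mem S (fun _ _ => measurableSet_closedBall)
          (fun y hy => hA y (hSA hy)) n
    _ ≤ _ := measure_mono hsub

lemma exp_neg_mul_two_log_div_le_one_div {x : ℝ} (hx : 2 ≤ x) :
    Real.exp (-(x * (2 * Real.log x / x))) / (2 * Real.log x / x) ≤ 1 / x := by
  have hx0 : 0 < x := by linarith
  have hlog : 1 ≤ 2 * Real.log x := by
    linarith [Real.log_two_gt_d9, Real.log_le_log (by norm_num) hx]
  have hexp : Real.exp (-(x * (2 * Real.log x / x))) = 1 / x ^ 2 := by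
    rw [mul_div_cancel₀ _ hx0.ne', ← Real.log_rpow hx0, Real.exp_neg, Real.exp_log (by positivity)]
    norm_num
  rw [hexp, div_le_div_iff₀ (by positivity) hx0]
  field_simp
  nlinarith

theorem sample_covering_of_support_general {D : ℕ} (d : ℕ) (hd : 1 ≤ d)
    (M : Set (EuclideanSpace ℝ (Fin D)))
    (μ : Measure (EuclideanSpace ℝ (Fin D))) [IsProbabilityMeasure μ]
    (τ c : ℝ) (hτ : 0 < τ) (hc : 0 < c)
    (hlow : ∀ x₀ ∈ M, ∀ ε : ℝ, 0 < ε → ε ≤ τ →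
      ENNReal.ofReal (c * ε ^ d) ≤ μ (closedBall x₀ ε)) :
    ∃ C c₁ : ℝ, 0 < C ∧ 0 < c₁ ∧ ∀ n : ℕ, C ≤ (n : ℝ) →
      ENNReal.ofReal (1 - 1 / (n : ℝ)) ≤
        (Measure.pi fun _ : Fin n => μ)
          {X | M ⊆ ⋃ i, closedBall (X i) (c₁ * (Real.log n / n) ^ ((1 : ℝ) / d))} := by
  have hd0 : d ≠ 0 := by omega
  have hrate : Filter.Tendsto (fun x : ℝ => 2 * Real.log x / x / c) Filter.atTop (nhds 0) := by
    simpa [mul_div_assoc] using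
      (Real.isLittleO_log_id_atTop.tendsto_div_nhds_zero.const_mul 2).div_const c
  obtain ⟨C₀, hC₀⟩ := Filter.eventually_atTop.mp (hrate.eventually_le_const (pow_pos hτ d))
  refine ⟨max C₀ 2, 3 * (2 / c) ^ ((1 : ℝ) / d), by positivity, by positivity, fun n hn => ?_⟩
  have hn2 : (2 : ℝ) ≤ n := le_of_max_le_right hn
  set p := 2 * Real.log n / n
  have hp : 0 < p := div_pos (by linarith [Real.log_pos (by linarith : (1 : ℝ) < n)]) (by linarith)
  set r := (p / c) ^ ((1 : ℝ) / d)
  have hr : 0 < r := by positivity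
  have hrd : r ^ d = p / c := by
    simp only [r, one_div]
    exact Real.rpow_inv_natCast_pow (by positivity) hd0
  have hrτ : r ≤ τ := (pow_le_pow_iff_left₀ hr.le hτ.le hd0).mp (hrd ▸ hC₀ n (le_of_max_le_left hn))
  have hradius : 3 * r = 3 * (2 / c) ^ ((1 : ℝ) / d) * (Real.log n / n) ^ ((1 : ℝ) / d) := by
    have hlog : 0 ≤ Real.log n / n := div_nonneg (Real.log_nonneg (by linarith)) (by linarith)
    rw [mul_assoc, ← Real.mul_rpow (by positivity) hlog,
      show 2 / c * (Real.log n / n) = p / c by simp only [p]; ring]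
  have htail : Real.exp (-(n * p)) / p ≤ 1 / n := exp_neg_mul_two_log_div_le_one_div hn2
  calc ENNReal.ofReal (1 - 1 / (n : ℝ))
      ≤ ENNReal.ofReal (1 - Real.exp (-(n * p)) / p) := ENNReal.ofReal_le_ofReal (by linarith)
    _ ≤ _ := ofReal_one_sub_le_measure_pi_subset_iUnion_closedBall hr.le hp
        (fun x hx => by simpa [hrd, mul_div_cancel₀ _ hc.ne'] using hlow x hx r hr hrτ) n
    _ = _ := by rw [hradius]

/-- If a probability measure on a compact set `M ⊂ ℝ^D` satisfies the
`d`-dimensional lower measure bound `μ(B_ε(x₀)) ≥ c ε^d`, then with probability at least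
`1 - 1/n`, the i.i.d. sample `X_1, …, X_n` forms a `c₁ (log n / n)^{1/d}`-net of `M`. -/
theorem sample_covering_of_support {D : ℕ} (d : ℕ) (hd : 1 ≤ d)
    (M : Set (EuclideanSpace ℝ (Fin D))) (hMc : IsCompact M)
    (μ : Measure (EuclideanSpace ℝ (Fin D))) [IsProbabilityMeasure μ]
    (hμM : μ Mᶜ = 0)
    (τ c : ℝ) (hτ : 0 < τ) (hc : 0 < c)
    (hlow : ∀ x₀ ∈ M, ∀ ε : ℝ, 0 < ε → ε ≤ τ →
      ENNReal.ofReal (c * ε ^ d) ≤ μ (closedBall x₀ ε)) :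
    ∃ C c₁ : ℝ, 0 < C ∧ 0 < c₁ ∧ ∀ n : ℕ, C ≤ (n : ℝ) →
      ENNReal.ofReal (1 - 1 / (n : ℝ)) ≤
        (Measure.pi fun _ : Fin n => μ)
          {X | M ⊆ ⋃ i, closedBall (X i) (c₁ * (Real.log n / n) ^ ((1 : ℝ) / d))} :=
  sample_covering_of_support_general d hd M μ τ c hτ hc hlow
end
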